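/- arXiv:2306.01145 — 8 statements merged into one kernel-verified Lean document; each statement's English description precedes it below -/
import Mathlib

section
/- Let ι be a nonempty finite index set and for each i ∈ ι let (Xᵢ, μᵢ) be a bounded fuzzy lattice with bottom 0ᵢ and top 1ᵢ, and let ⊙ᵢ, ⊕ᵢ be operations on Xᵢ such that xᵢ ⊙ᵢ yᵢ is a fuzzy meet and xᵢ ⊕ᵢ yᵢ is a fuzzy join of xᵢ and yᵢ. Define μ_p on the product Π_{i∈ι} Xᵢ by μ_p(f, g) = min_{i∈ι} μᵢ(f(i), g(i)). Then μ_p is a fuzzy partial order on Π Xᵢ; for all f, g the function i ↦ f(i) ⊙ᵢ g(i) is a fuzzy meet of f and g and the function i ↦ f(i) ⊕ᵢ g(i) is a fuzzy join of f and g with respect to μ_p; and μ_p(i ↦ 0ᵢ, f) > 0 and μ_p(f, i ↦ 1ᵢ) > 0 for all f. In particular, the direct minimum product of bounded fuzzy lattices is a bounded fuzzy lattice. -/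
/-- A fuzzy partial order on `X`: a `[0,1]`-valued relation that is reflexive,
(preference-sensitively) transitive, and antisymmetric. -/
def IsFuzzyOrder {X : Type*} (μ : X → X → ℝ) : Prop :=
  (∀ x y, μ x y ∈ Set.Icc (0:ℝ) 1) ∧
  (∀ x, μ x x = 1) ∧
  (∀ x y z, 0 < μ x y → 0 < μ y z → 0 < μ x z) ∧
  (∀ x y, 0 < μ x y → 0 < μ y x → x = y)

/-- `m` is a fuzzy meet (greatest fuzzy lower bound) of `x` and `y`. -/
def IsFuzzyMeet {X : Type*} (μ : X → X → ℝ) (x y m : X) : Prop :=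
  0 < μ m x ∧ 0 < μ m y ∧ ∀ z, 0 < μ z x → 0 < μ z y → 0 < μ z m

/-- `j` is a fuzzy join (least fuzzy upper bound) of `x` and `y`. -/
def IsFuzzyJoin {X : Type*} (μ : X → X → ℝ) (x y j : X) : Prop :=
  0 < μ x j ∧ 0 < μ y j ∧ ∀ w, 0 < μ x w → 0 < μ y w → 0 < μ j w

/-- The direct minimum product relation on a finite product of fuzzy relational frames. -/
noncomputable def minProdRel {ι : Type*} [Fintype ι] [Nonempty ι] {X : ι → Type*}
    (μ : ∀ i, X i → X i → ℝ) (f g : ∀ i, X i) : ℝ :=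
  Finset.univ.inf' Finset.univ_nonempty fun i => μ i (f i) (g i)

lemma minProdRel_pos_iff {ι : Type*} [Fintype ι] [Nonempty ι] {X : ι → Type*}
    (μ : ∀ i, X i → X i → ℝ) (f g : ∀ i, X i) :
    0 < minProdRel μ f g ↔ ∀ i, 0 < μ i (f i) (g i) := by
  simp [minProdRel, Finset.lt_inf'_iff]

theorem min_product_bounded_fuzzy_lattice {ι : Type*} [Fintype ι] [Nonempty ι]
    {X : ι → Type*} (μ : ∀ i, X i → X i → ℝ) (hμ : ∀ i, IsFuzzyOrder (μ i))
    (bot top : ∀ i, X i)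
    (hbot : ∀ i x, 0 < μ i (bot i) x) (htop : ∀ i x, 0 < μ i x (top i))
    (meet join : ∀ i, X i → X i → X i)
    (hmeet : ∀ i x y, IsFuzzyMeet (μ i) x y (meet i x y))
    (hjoin : ∀ i x y, IsFuzzyJoin (μ i) x y (join i x y)) :
    IsFuzzyOrder (minProdRel μ) ∧
    (∀ f g : ∀ i, X i, IsFuzzyMeet (minProdRel μ) f g (fun i => meet i (f i) (g i))) ∧
    (∀ f g : ∀ i, X i, IsFuzzyJoin (minProdRel μ) f g (fun i => join i (f i) (g i))) ∧
    (∀ f : ∀ i, X i, 0 < minProdRel μ bot f) ∧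
    (∀ f : ∀ i, X i, 0 < minProdRel μ f top) := by
  refine ⟨⟨?_, ?_, ?_, ?_⟩, ?_, ?_, ?_, ?_⟩
  · intro f g
    unfold minProdRel
    constructor
    · rw [Finset.le_inf'_iff]
      exact fun i _ => ((hμ i).1 (f i) (g i)).1
    · rw [Finset.inf'_le_iff]
      obtain ⟨i⟩ := ‹Nonempty ι›
      exact ⟨i, Finset.mem_univ i, ((hμ i).1 (f i) (g i)).2⟩
  · intro f
    have : ∀ i, μ i (f i) (f i) = 1 := fun i => (hμ i).2.1 (f i)
    simp [minProdRel, this]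
  · intro f g h h1 h2
    rw [minProdRel_pos_iff] at *
    exact fun i => (hμ i).2.2.1 _ _ _ (h1 i) (h2 i)
  · intro f g h1 h2
    rw [minProdRel_pos_iff] at *
    funext i
    exact (hμ i).2.2.2 _ _ (h1 i) (h2 i)
  · intro f g
    refine ⟨?_, ?_, ?_⟩
    · rw [minProdRel_pos_iff]; exact fun i => (hmeet i (f i) (g i)).1
    · rw [minProdRel_pos_iff]; exact fun i => (hmeet i (f i) (g i)).2.1
    · intro z h1 h2
      rw [minProdRel_pos_iff] at *
      exact fun i => (hmeet i (f i) (g i)).2.2 _ (h1 i) (h2 i)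
  · intro f g
    refine ⟨?_, ?_, ?_⟩
    · rw [minProdRel_pos_iff]; exact fun i => (hjoin i (f i) (g i)).1
    · rw [minProdRel_pos_iff]; exact fun i => (hjoin i (f i) (g i)).2.1
    · intro w h1 h2
      rw [minProdRel_pos_iff] at *
      exact fun i => (hjoin i (f i) (g i)).2.2 _ (h1 i) (h2 i)
  · intro f; rw [minProdRel_pos_iff]; exact fun i => hbot i (f i)
  · intro f; rw [minProdRel_pos_iff]; exact fun i => htop i (f i)
end

section
/- There exist fuzzy partial orders μ₁ and μ₂ on the four-element set X = Fin 4 such that the fuzzy relation μ_p on X × X defined by μ_p((x₁,x₂),(y₁,y₂)) = max(μ₁(x₁,y₁) + μ₂(x₂,y₂) − 1, 0) (the direct product realized by the Łukasiewicz triangular norm) is not transitive, and hence not a fuzzy partial order. -/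
noncomputable def myMu : Fin 4 → Fin 4 → ℝ := fun x y =>
  if x = y then 1
  else if x = 0 ∧ y = 1 then 0.6
  else if x = 1 ∧ y = 2 then 0.6
  else if x = 0 ∧ y = 2 then 0.3
  else 0

lemma myMu_order : IsFuzzyOrder myMu := by
  refine ⟨?_, ?_, ?_, ?_⟩
  · intro x y; fin_cases x <;> fin_cases y <;> simp [myMu] <;> norm_num
  · intro x; simp [myMu]
  · intro x y z; fin_cases x <;> fin_cases y <;> fin_cases z <;> simp [myMu] <;> norm_num
  · intro x y; fin_cases x <;> fin_cases y <;> simp [myMu] <;> norm_num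

theorem lukasiewicz_product_not_fuzzy_order :
    ∃ μ₁ μ₂ : Fin 4 → Fin 4 → ℝ, IsFuzzyOrder μ₁ ∧ IsFuzzyOrder μ₂ ∧
      ¬ (∀ p q r : Fin 4 × Fin 4,
          0 < max (μ₁ p.1 q.1 + μ₂ p.2 q.2 - 1) 0 →
          0 < max (μ₁ q.1 r.1 + μ₂ q.2 r.2 - 1) 0 →
          0 < max (μ₁ p.1 r.1 + μ₂ p.2 r.2 - 1) 0) := by
  refine ⟨myMu, myMu, myMu_order, myMu_order, ?_⟩
  intro h
  have := h (0, 0) (1, 1) (2, 2) (by norm_num [myMu, Fin.ext_iff]) (by norm_num [myMu, Fin.ext_iff])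
  norm_num [myMu, Fin.ext_iff] at this
end

section
/- Let τ be a triangular norm without zero divisors, and let (X₁, μ₁) and (X₂, μ₂) be bounded fuzzy lattices with bottoms 0₁, 0₂, tops 1₁, 1₂, and chosen operations ⊙₁, ⊕₁ and ⊙₂, ⊕₂ giving fuzzy meets and joins. Define μ_p on X₁ × X₂ by μ_p((x₁,x₂),(y₁,y₂)) = τ(μ₁(x₁,y₁), μ₂(x₂,y₂)). Then μ_p is a fuzzy partial order; for all (x₁,x₂), (y₁,y₂) the pair (x₁ ⊙₁ y₁, x₂ ⊙₂ y₂) is a fuzzy meet and (x₁ ⊕₁ y₁, x₂ ⊕₂ y₂) is a fuzzy join of (x₁,x₂) and (y₁,y₂) with respect to μ_p; and μ_p((0₁,0₂),(x₁,x₂)) > 0 and μ_p((x₁,x₂),(1₁,1₂)) > 0 for all (x₁,x₂). In particular, the direct product of bounded fuzzy lattices realized by a triangular norm without zero divisors is a bounded fuzzy lattice. -/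
/-- A triangular norm on `[0,1]` (represented as a real-valued binary map on `[0,1]`). -/
structure IsTNorm (τ : ℝ → ℝ → ℝ) : Prop where
  mem : ∀ a ∈ Set.Icc (0:ℝ) 1, ∀ b ∈ Set.Icc (0:ℝ) 1, τ a b ∈ Set.Icc (0:ℝ) 1
  assoc : ∀ a ∈ Set.Icc (0:ℝ) 1, ∀ b ∈ Set.Icc (0:ℝ) 1, ∀ c ∈ Set.Icc (0:ℝ) 1,
    τ a (τ b c) = τ (τ a b) c
  mono : ∀ a ∈ Set.Icc (0:ℝ) 1, ∀ b ∈ Set.Icc (0:ℝ) 1, ∀ c ∈ Set.Icc (0:ℝ) 1,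
    b ≤ c → τ a b ≤ τ a c
  comm : ∀ a ∈ Set.Icc (0:ℝ) 1, ∀ b ∈ Set.Icc (0:ℝ) 1, τ a b = τ b a
  unit : ∀ a ∈ Set.Icc (0:ℝ) 1, τ a 1 = a

/-- `τ` has a zero divisor: some `a ∈ (0,1)` with `τ a b = 0` for some `b ∈ (0,1)`. -/
def HasZeroDivisorTNorm (τ : ℝ → ℝ → ℝ) : Prop :=
  ∃ a ∈ Set.Ioo (0:ℝ) 1, ∃ b ∈ Set.Ioo (0:ℝ) 1, τ a b = 0

lemma tnorm_zero_right {τ : ℝ → ℝ → ℝ} (hτ : IsTNorm τ)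
    {a : ℝ} (ha : a ∈ Set.Icc (0:ℝ) 1) : τ a 0 = 0 := by
  have h01 : (0:ℝ) ∈ Set.Icc (0:ℝ) 1 := by constructor <;> norm_num
  have h11 : (1:ℝ) ∈ Set.Icc (0:ℝ) 1 := by constructor <;> norm_num
  have hle : τ a 0 ≤ 0 := by
    calc τ a 0 = τ 0 a := hτ.comm a ha 0 h01
    _ ≤ τ 0 1 := hτ.mono 0 h01 a ha 1 h11 ha.2
    _ = 0 := hτ.unit 0 h01
  exact le_antisymm hle (hτ.mem a ha 0 h01).1

lemma tnorm_pos_iff {τ : ℝ → ℝ → ℝ} (hτ : IsTNorm τ) (hzd : ¬ HasZeroDivisorTNorm τ)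
    {a b : ℝ} (ha : a ∈ Set.Icc (0:ℝ) 1) (hb : b ∈ Set.Icc (0:ℝ) 1) :
    0 < τ a b ↔ 0 < a ∧ 0 < b := by
  constructor
  · intro h
    constructor
    · rcases lt_or_eq_of_le ha.1 with h' | h'
      · exact h'
      · exfalso
        have : τ a b = 0 := by
          rw [← h', hτ.comm 0 (by constructor <;> norm_num) b hb]
          exact tnorm_zero_right hτ hb
        simp [this] at h
    · rcases lt_or_eq_of_le hb.1 with h' | h'
      · exact h'
      · exfalso
        have : τ a b = 0 := by rw [← h']; exact tnorm_zero_right hτ ha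
        simp [this] at h
  · rintro ⟨ha0, hb0⟩
    rcases eq_or_lt_of_le ha.2 with ha1 | ha1
    · rw [ha1, hτ.comm 1 (by constructor <;> norm_num) b hb, hτ.unit b hb]; exact hb0
    rcases eq_or_lt_of_le hb.2 with hb1 | hb1
    · rw [hb1, hτ.unit a ha]; exact ha0
    have := hτ.mem a ha b hb
    rcases lt_or_eq_of_le this.1 with h' | h'
    · exact h'
    · exact absurd ⟨a, ⟨ha0, ha1⟩, b, ⟨hb0, hb1⟩, h'.symm⟩ hzd

theorem tnorm_product_bounded_fuzzy_lattice {X₁ X₂ : Type*} (τ : ℝ → ℝ → ℝ)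
    (hτ : IsTNorm τ) (hzd : ¬ HasZeroDivisorTNorm τ)
    (μ₁ : X₁ → X₁ → ℝ) (μ₂ : X₂ → X₂ → ℝ)
    (h₁ : IsFuzzyOrder μ₁) (h₂ : IsFuzzyOrder μ₂)
    (bot₁ top₁ : X₁) (bot₂ top₂ : X₂)
    (hbot₁ : ∀ x, 0 < μ₁ bot₁ x) (htop₁ : ∀ x, 0 < μ₁ x top₁)
    (hbot₂ : ∀ x, 0 < μ₂ bot₂ x) (htop₂ : ∀ x, 0 < μ₂ x top₂)
    (meet₁ join₁ : X₁ → X₁ → X₁) (meet₂ join₂ : X₂ → X₂ → X₂)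
    (hmeet₁ : ∀ x y, IsFuzzyMeet μ₁ x y (meet₁ x y))
    (hjoin₁ : ∀ x y, IsFuzzyJoin μ₁ x y (join₁ x y))
    (hmeet₂ : ∀ x y, IsFuzzyMeet μ₂ x y (meet₂ x y))
    (hjoin₂ : ∀ x y, IsFuzzyJoin μ₂ x y (join₂ x y)) :
    IsFuzzyOrder (fun p q : X₁ × X₂ => τ (μ₁ p.1 q.1) (μ₂ p.2 q.2)) ∧
    (∀ p q : X₁ × X₂, IsFuzzyMeet (fun p q : X₁ × X₂ => τ (μ₁ p.1 q.1) (μ₂ p.2 q.2))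
      p q (meet₁ p.1 q.1, meet₂ p.2 q.2)) ∧
    (∀ p q : X₁ × X₂, IsFuzzyJoin (fun p q : X₁ × X₂ => τ (μ₁ p.1 q.1) (μ₂ p.2 q.2))
      p q (join₁ p.1 q.1, join₂ p.2 q.2)) ∧
    (∀ p : X₁ × X₂, 0 < τ (μ₁ bot₁ p.1) (μ₂ bot₂ p.2)) ∧
    (∀ p : X₁ × X₂, 0 < τ (μ₁ p.1 top₁) (μ₂ p.2 top₂)) := by
  obtain ⟨m₁, r₁, t₁, a₁⟩ := h₁
  obtain ⟨m₂, r₂, t₂, a₂⟩ := h₂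
  have key : ∀ (p q : X₁ × X₂),
      0 < τ (μ₁ p.1 q.1) (μ₂ p.2 q.2) ↔ 0 < μ₁ p.1 q.1 ∧ 0 < μ₂ p.2 q.2 :=
    fun p q => tnorm_pos_iff hτ hzd (m₁ p.1 q.1) (m₂ p.2 q.2)
  refine ⟨⟨fun p q => hτ.mem _ (m₁ p.1 q.1) _ (m₂ p.2 q.2), ?_, ?_, ?_⟩, ?_, ?_, ?_, ?_⟩
  · intro p; show τ (μ₁ p.1 p.1) (μ₂ p.2 p.2) = 1
    rw [r₁, r₂]; exact hτ.unit 1 (by constructor <;> norm_num)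
  · intro p q s hpq hqs
    rw [key] at hpq hqs ⊢
    exact ⟨t₁ _ _ _ hpq.1 hqs.1, t₂ _ _ _ hpq.2 hqs.2⟩
  · intro p q hpq hqp
    rw [key] at hpq hqp
    exact Prod.ext (a₁ _ _ hpq.1 hqp.1) (a₂ _ _ hpq.2 hqp.2)
  · intro p q
    obtain ⟨hx, hy, hg⟩ := hmeet₁ p.1 q.1
    obtain ⟨hx', hy', hg'⟩ := hmeet₂ p.2 q.2
    refine ⟨(key _ _).2 ⟨hx, hx'⟩, (key _ _).2 ⟨hy, hy'⟩, fun z hz1 hz2 => ?_⟩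
    rw [key] at hz1 hz2 ⊢
    exact ⟨hg _ hz1.1 hz2.1, hg' _ hz1.2 hz2.2⟩
  · intro p q
    obtain ⟨hx, hy, hg⟩ := hjoin₁ p.1 q.1
    obtain ⟨hx', hy', hg'⟩ := hjoin₂ p.2 q.2
    refine ⟨(key _ _).2 ⟨hx, hx'⟩, (key _ _).2 ⟨hy, hy'⟩, fun w hw1 hw2 => ?_⟩
    rw [key] at hw1 hw2 ⊢
    exact ⟨hg _ hw1.1 hw2.1, hg' _ hw1.2 hw2.2⟩
  · intro p; exact (key (bot₁, bot₂) p).2 ⟨hbot₁ p.1, hbot₂ p.2⟩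
  · intro p; exact (key p (top₁, top₂)).2 ⟨htop₁ p.1, htop₂ p.2⟩
end

section
/- Let ι be a nonempty finite index set and for each i ∈ ι let (Xᵢ, μᵢ) be a bounded fuzzy lattice with bottom 0ᵢ and top 1ᵢ, and let ⊙ᵢ, ⊕ᵢ be operations on Xᵢ such that xᵢ ⊙ᵢ yᵢ is a fuzzy meet and xᵢ ⊕ᵢ yᵢ is a fuzzy join of xᵢ and yᵢ. Define μ_p on the product Π_{i∈ι} Xᵢ by μ_p(f, g) = Π_{i∈ι} μᵢ(f(i), g(i)) (the direct algebraic product). Then μ_p is a fuzzy partial order on Π Xᵢ; for all f, g the function i ↦ f(i) ⊙ᵢ g(i) is a fuzzy meet of f and g and the function i ↦ f(i) ⊕ᵢ g(i) is a fuzzy join of f and g with respect to μ_p; and μ_p(i ↦ 0ᵢ, f) > 0 and μ_p(f, i ↦ 1ᵢ) > 0 for all f. In particular, the direct algebraic product of bounded fuzzy lattices is a bounded fuzzy lattice. -/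
/-- The direct algebraic product relation on a finite product of fuzzy relational frames. -/
noncomputable def algProdRel {ι : Type*} [Fintype ι] {X : ι → Type*}
    (μ : ∀ i, X i → X i → ℝ) (f g : ∀ i, X i) : ℝ :=
  ∏ i, μ i (f i) (g i)

theorem algebraic_product_bounded_fuzzy_lattice {ι : Type*} [Fintype ι] [Nonempty ι]
    {X : ι → Type*} (μ : ∀ i, X i → X i → ℝ) (hμ : ∀ i, IsFuzzyOrder (μ i))
    (bot top : ∀ i, X i)
    (hbot : ∀ i x, 0 < μ i (bot i) x) (htop : ∀ i x, 0 < μ i x (top i))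
    (meet join : ∀ i, X i → X i → X i)
    (hmeet : ∀ i x y, IsFuzzyMeet (μ i) x y (meet i x y))
    (hjoin : ∀ i x y, IsFuzzyJoin (μ i) x y (join i x y)) :
    IsFuzzyOrder (algProdRel μ) ∧
    (∀ f g : ∀ i, X i, IsFuzzyMeet (algProdRel μ) f g (fun i => meet i (f i) (g i))) ∧
    (∀ f g : ∀ i, X i, IsFuzzyJoin (algProdRel μ) f g (fun i => join i (f i) (g i))) ∧
    (∀ f : ∀ i, X i, 0 < algProdRel μ bot f) ∧
    (∀ f : ∀ i, X i, 0 < algProdRel μ f top) := by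
  have nonneg : ∀ i (x y : X i), 0 ≤ μ i x y := fun i x y => ((hμ i).1 x y).1
  have le1 : ∀ i (x y : X i), μ i x y ≤ 1 := fun i x y => ((hμ i).1 x y).2
  have pos_iff : ∀ f g : ∀ i, X i,
      (0 < algProdRel μ f g ↔ ∀ i, 0 < μ i (f i) (g i)) := by
    intro f g
    constructor
    · intro h i
      by_contra hc
      push_neg at hc
      have : μ i (f i) (g i) = 0 := le_antisymm hc (nonneg i _ _)
      have : algProdRel μ f g = 0 := by
        unfold algProdRel
        exact Finset.prod_eq_zero (Finset.mem_univ i) this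
      simp [this] at h
    · intro h
      exact Finset.prod_pos fun i _ => h i
  refine ⟨⟨?_, ?_, ?_, ?_⟩, ?_, ?_, ?_, ?_⟩
  · intro f g
    exact ⟨Finset.prod_nonneg fun i _ => nonneg i _ _,
      Finset.prod_le_one (fun i _ => nonneg i _ _) (fun i _ => le1 i _ _)⟩
  · intro f
    unfold algProdRel
    simp [(hμ _).2.1]
  · intro f g h hfg hgh
    rw [pos_iff] at hfg hgh ⊢
    exact fun i => (hμ i).2.2.1 _ _ _ (hfg i) (hgh i)
  · intro f g hfg hgf
    rw [pos_iff] at hfg hgf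
    funext i
    exact (hμ i).2.2.2 _ _ (hfg i) (hgf i)
  · intro f g
    refine ⟨(pos_iff _ _).2 fun i => (hmeet i _ _).1,
      (pos_iff _ _).2 fun i => (hmeet i _ _).2.1, ?_⟩
    intro z hzf hzg
    rw [pos_iff] at hzf hzg ⊢
    exact fun i => (hmeet i _ _).2.2 _ (hzf i) (hzg i)
  · intro f g
    refine ⟨(pos_iff _ _).2 fun i => (hjoin i _ _).1,
      (pos_iff _ _).2 fun i => (hjoin i _ _).2.1, ?_⟩
    intro w hfw hgw
    rw [pos_iff] at hfw hgw ⊢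
    exact fun i => (hjoin i _ _).2.2 _ (hfw i) (hgw i)
  · intro f
    exact (pos_iff _ _).2 fun i => hbot i _
  · intro f
    exact (pos_iff _ _).2 fun i => htop i _
end

section
/- Let (X₁, μ₁) and (X₂, μ₂) be bounded fuzzy lattices with bottoms 0₁, 0₂, tops 1₁, 1₂, and chosen operations ⊙₁, ⊕₁ and ⊙₂, ⊕₂ giving fuzzy meets and joins. Define μ_p on X₁ × X₂ by μ_p((x₁,x₂),(y₁,y₂)) = 0 if μ₁(x₁,y₁) = μ₂(x₂,y₂) = 0, and μ_p((x₁,x₂),(y₁,y₂)) = (μ₁(x₁,y₁)·μ₂(x₂,y₂)) / (μ₁(x₁,y₁) + μ₂(x₂,y₂) − μ₁(x₁,y₁)·μ₂(x₂,y₂)) otherwise (the direct Hamacher product). Then μ_p is a fuzzy partial order; the coordinatewise meet (x₁ ⊙₁ y₁, x₂ ⊙₂ y₂) is a fuzzy meet and the coordinatewise join (x₁ ⊕₁ y₁, x₂ ⊕₂ y₂) is a fuzzy join of (x₁,x₂) and (y₁,y₂) with respect to μ_p; and μ_p((0₁,0₂),(x₁,x₂)) > 0 and μ_p((x₁,x₂),(1₁,1₂))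 > 0 for all (x₁,x₂). In particular, the direct Hamacher product of bounded fuzzy lattices is a bounded fuzzy lattice. -/
/-- The direct Hamacher product relation on `X₁ × X₂`. -/
noncomputable def hamacherProdRel {X₁ X₂ : Type*} (μ₁ : X₁ → X₁ → ℝ)
    (μ₂ : X₂ → X₂ → ℝ) (p q : X₁ × X₂) : ℝ :=
  if μ₁ p.1 q.1 = 0 ∧ μ₂ p.2 q.2 = 0 then 0
  else (μ₁ p.1 q.1 * μ₂ p.2 q.2) /
    (μ₁ p.1 q.1 + μ₂ p.2 q.2 - μ₁ p.1 q.1 * μ₂ p.2 q.2)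


noncomputable def ham (a b : ℝ) : ℝ :=
  if a = 0 ∧ b = 0 then 0 else a * b / (a + b - a * b)

lemma ham_denom_pos {a b : ℝ} (ha : a ∈ Set.Icc (0:ℝ) 1) (hb : b ∈ Set.Icc (0:ℝ) 1)
    (h : ¬(a = 0 ∧ b = 0)) : 0 < a + b - a * b := by
  obtain ⟨ha0, ha1⟩ := ha; obtain ⟨hb0, hb1⟩ := hb
  rcases lt_or_eq_of_le hb0 with hb | hb
  · nlinarith
  · have ha' : a ≠ 0 := fun h' => h ⟨h', hb.symm⟩
    have : 0 < a := lt_of_le_of_ne ha0 (Ne.symm ha')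
    nlinarith

lemma ham_pos_iff {a b : ℝ} (ha : a ∈ Set.Icc (0:ℝ) 1) (hb : b ∈ Set.Icc (0:ℝ) 1) :
    0 < ham a b ↔ 0 < a ∧ 0 < b := by
  unfold ham
  by_cases h : a = 0 ∧ b = 0
  · simp [h.1]
  · rw [if_neg h]
    have hd := ham_denom_pos ha hb h
    constructor
    · intro hp
      have hnum : 0 < a * b := by
        rcases div_pos_iff.mp hp with ⟨h1, _⟩ | ⟨_, h2⟩
        · exact h1
        · linarith
      constructor <;> nlinarith [ha.1, hb.1, ha.2, hb.2]
    · rintro ⟨h1, h2⟩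
      exact div_pos (mul_pos h1 h2) hd

lemma ham_mem_Icc {a b : ℝ} (ha : a ∈ Set.Icc (0:ℝ) 1) (hb : b ∈ Set.Icc (0:ℝ) 1) :
    ham a b ∈ Set.Icc (0:ℝ) 1 := by
  unfold ham
  by_cases h : a = 0 ∧ b = 0
  · simp [h]
  · rw [if_neg h]
    have hd := ham_denom_pos ha hb h
    obtain ⟨ha0, ha1⟩ := ha; obtain ⟨hb0, hb1⟩ := hb
    constructor
    · positivity
    · rw [div_le_one hd]; nlinarith

lemma ham_one : ham 1 1 = 1 := by norm_num [ham]

theorem hamacher_product_bounded_fuzzy_lattice {X₁ X₂ : Type*}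
    (μ₁ : X₁ → X₁ → ℝ) (μ₂ : X₂ → X₂ → ℝ)
    (h₁ : IsFuzzyOrder μ₁) (h₂ : IsFuzzyOrder μ₂)
    (bot₁ top₁ : X₁) (bot₂ top₂ : X₂)
    (hbot₁ : ∀ x, 0 < μ₁ bot₁ x) (htop₁ : ∀ x, 0 < μ₁ x top₁)
    (hbot₂ : ∀ x, 0 < μ₂ bot₂ x) (htop₂ : ∀ x, 0 < μ₂ x top₂)
    (meet₁ join₁ : X₁ → X₁ → X₁) (meet₂ join₂ : X₂ → X₂ → X₂)
    (hmeet₁ : ∀ x y, IsFuzzyMeet μ₁ x y (meet₁ x y))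
    (hjoin₁ : ∀ x y, IsFuzzyJoin μ₁ x y (join₁ x y))
    (hmeet₂ : ∀ x y, IsFuzzyMeet μ₂ x y (meet₂ x y))
    (hjoin₂ : ∀ x y, IsFuzzyJoin μ₂ x y (join₂ x y)) :
    IsFuzzyOrder (hamacherProdRel μ₁ μ₂) ∧
    (∀ p q : X₁ × X₂, IsFuzzyMeet (hamacherProdRel μ₁ μ₂)
      p q (meet₁ p.1 q.1, meet₂ p.2 q.2)) ∧
    (∀ p q : X₁ × X₂, IsFuzzyJoin (hamacherProdRel μ₁ μ₂)
      p q (join₁ p.1 q.1, join₂ p.2 q.2)) ∧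
    (∀ p : X₁ × X₂, 0 < hamacherProdRel μ₁ μ₂ (bot₁, bot₂) p) ∧
    (∀ p : X₁ × X₂, 0 < hamacherProdRel μ₁ μ₂ p (top₁, top₂)) := by
  
  obtain ⟨hIcc₁, hrefl₁, htrans₁, hanti₁⟩ := h₁
  obtain ⟨hIcc₂, hrefl₂, htrans₂, hanti₂⟩ := h₂
  have heq : ∀ p q : X₁ × X₂, hamacherProdRel μ₁ μ₂ p q = ham (μ₁ p.1 q.1) (μ₂ p.2 q.2) :=
    fun p q => rfl
  have hpos : ∀ p q : X₁ × X₂,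
      0 < hamacherProdRel μ₁ μ₂ p q ↔ 0 < μ₁ p.1 q.1 ∧ 0 < μ₂ p.2 q.2 := by
    intro p q
    rw [heq]
    exact ham_pos_iff (hIcc₁ _ _) (hIcc₂ _ _)
  refine ⟨⟨?_, ?_, ?_, ?_⟩, ?_, ?_, ?_, ?_⟩
  · intro p q
    rw [heq]
    exact ham_mem_Icc (hIcc₁ _ _) (hIcc₂ _ _)
  · intro p
    rw [heq, hrefl₁, hrefl₂, ham_one]
  · intro p q r hpq hqr
    rw [hpos] at hpq hqr ⊢
    exact ⟨htrans₁ _ _ _ hpq.1 hqr.1, htrans₂ _ _ _ hpq.2 hqr.2⟩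
  · intro p q hpq hqp
    rw [hpos] at hpq hqp
    exact Prod.ext (hanti₁ _ _ hpq.1 hqp.1) (hanti₂ _ _ hpq.2 hqp.2)
  · intro p q
    obtain ⟨m1a, m1b, m1c⟩ := hmeet₁ p.1 q.1
    obtain ⟨m2a, m2b, m2c⟩ := hmeet₂ p.2 q.2
    refine ⟨(hpos _ _).mpr ⟨m1a, m2a⟩, (hpos _ _).mpr ⟨m1b, m2b⟩, ?_⟩
    intro z hz1 hz2
    rw [hpos] at hz1 hz2 ⊢
    exact ⟨m1c _ hz1.1 hz2.1, m2c _ hz1.2 hz2.2⟩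
  · intro p q
    obtain ⟨j1a, j1b, j1c⟩ := hjoin₁ p.1 q.1
    obtain ⟨j2a, j2b, j2c⟩ := hjoin₂ p.2 q.2
    refine ⟨(hpos _ _).mpr ⟨j1a, j2a⟩, (hpos _ _).mpr ⟨j1b, j2b⟩, ?_⟩
    intro w hw1 hw2
    rw [hpos] at hw1 hw2 ⊢
    exact ⟨j1c _ hw1.1 hw2.1, j2c _ hw1.2 hw2.2⟩
  · intro p
    exact (hpos _ _).mpr ⟨hbot₁ _, hbot₂ _⟩
  · intro p
    exact (hpos _ _).mpr ⟨htop₁ _, htop₂ _⟩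
end

section
/- Let τ be a triangular norm without zero divisors, and let (X₁, μ₁) and (X₂, μ₂) be fuzzy lattices with chosen operations ⊙₁, ⊕₁ and ⊙₂, ⊕₂ giving fuzzy meets and joins, each distributive (i.e., x ⊙ᵢ (y ⊕ᵢ z) = (x ⊙ᵢ y) ⊕ᵢ (x ⊙ᵢ z) for all x, y, z in Xᵢ). Define μ_p on X₁ × X₂ by μ_p((x₁,x₂),(y₁,y₂)) = τ(μ₁(x₁,y₁), μ₂(x₂,y₂)), and define ⊙ and ⊕ coordinatewise on X₁ × X₂. Then μ_p is a fuzzy partial order, the coordinatewise operations give fuzzy meets and fuzzy joins with respect to μ_p, and the distributive law x ⊙ (y ⊕ z) = (x ⊙ y) ⊕ (x ⊙ z) holds on X₁ × X₂; i.e., the direct product is a distributive fuzzy lattice. -/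
theorem tnorm_product_distributive {X₁ X₂ : Type*} (τ : ℝ → ℝ → ℝ)
    (hτ : IsTNorm τ) (hzd : ¬ HasZeroDivisorTNorm τ)
    (μ₁ : X₁ → X₁ → ℝ) (μ₂ : X₂ → X₂ → ℝ)
    (h₁ : IsFuzzyOrder μ₁) (h₂ : IsFuzzyOrder μ₂)
    (meet₁ join₁ : X₁ → X₁ → X₁) (meet₂ join₂ : X₂ → X₂ → X₂)
    (hmeet₁ : ∀ x y, IsFuzzyMeet μ₁ x y (meet₁ x y))
    (hjoin₁ : ∀ x y, IsFuzzyJoin μ₁ x y (join₁ x y))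
    (hmeet₂ : ∀ x y, IsFuzzyMeet μ₂ x y (meet₂ x y))
    (hjoin₂ : ∀ x y, IsFuzzyJoin μ₂ x y (join₂ x y))
    (hd₁ : ∀ x y z : X₁, meet₁ x (join₁ y z) = join₁ (meet₁ x y) (meet₁ x z))
    (hd₂ : ∀ x y z : X₂, meet₂ x (join₂ y z) = join₂ (meet₂ x y) (meet₂ x z)) :
    IsFuzzyOrder (fun p q : X₁ × X₂ => τ (μ₁ p.1 q.1) (μ₂ p.2 q.2)) ∧
    (∀ p q : X₁ × X₂, IsFuzzyMeet (fun p q : X₁ × X₂ => τ (μ₁ p.1 q.1) (μ₂ p.2 q.2))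
      p q (meet₁ p.1 q.1, meet₂ p.2 q.2)) ∧
    (∀ p q : X₁ × X₂, IsFuzzyJoin (fun p q : X₁ × X₂ => τ (μ₁ p.1 q.1) (μ₂ p.2 q.2))
      p q (join₁ p.1 q.1, join₂ p.2 q.2)) ∧
    (∀ p q r : X₁ × X₂, (meet₁ p.1 (join₁ q.1 r.1), meet₂ p.2 (join₂ q.2 r.2)) = (join₁ (meet₁ p.1 q.1) (meet₁ p.1 r.1), join₂ (meet₂ p.2 q.2) (meet₂ p.2 r.2))) := by
  obtain ⟨hm₁, hr₁, ht₁, ha₁⟩ := h₁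
  obtain ⟨hm₂, hr₂, ht₂, ha₂⟩ := h₂
  have key : ∀ a ∈ Set.Icc (0:ℝ) 1, ∀ b ∈ Set.Icc (0:ℝ) 1,
      (0 < τ a b ↔ 0 < a ∧ 0 < b) := by
    intro a ha b hb
    constructor
    · intro h
      constructor
      · by_contra h0
        push_neg at h0
        have ha0 : a = 0 := le_antisymm h0 ha.1
        subst ha0
        have : τ 0 b ≤ τ 0 1 := hτ.mono 0 (by norm_num) b hb 1 (by norm_num) hb.2
        rw [hτ.unit 0 (by norm_num)] at this
        linarith
      · by_contra h0
        push_neg at h0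
        have hb0 : b = 0 := le_antisymm h0 hb.1
        subst hb0
        rw [hτ.comm a ha 0 (by norm_num)] at h
        have h2 : τ 0 a ≤ τ 0 1 := hτ.mono 0 (by norm_num) a ha 1 (by norm_num) ha.2
        rw [hτ.unit 0 (by norm_num)] at h2
        linarith
    · rintro ⟨ha0, hb0⟩
      rcases (hτ.mem a ha b hb).1.lt_or_eq with h | h
      · exact h
      exfalso
      rcases ha.2.lt_or_eq with ha1 | ha1
      · rcases hb.2.lt_or_eq with hb1 | hb1
        · exact hzd ⟨a, ⟨ha0, ha1⟩, b, ⟨hb0, hb1⟩, h.symm⟩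
        · subst hb1
          rw [hτ.unit a ha] at h
          linarith
      · subst ha1
        rw [hτ.comm 1 (by norm_num) b hb, hτ.unit b hb] at h
        linarith
  have keyp : ∀ (p q : X₁ × X₂),
      (0 < τ (μ₁ p.1 q.1) (μ₂ p.2 q.2) ↔ 0 < μ₁ p.1 q.1 ∧ 0 < μ₂ p.2 q.2) :=
    fun p q => key _ (hm₁ p.1 q.1) _ (hm₂ p.2 q.2)
  refine ⟨⟨fun p q => hτ.mem _ (hm₁ p.1 q.1) _ (hm₂ p.2 q.2),
    fun p => by simp [hr₁ p.1, hr₂ p.2, hτ.unit 1 (by norm_num)],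
    fun p q r hpq hqr => ?_, fun p q hpq hqp => ?_⟩, ?_, ?_, ?_⟩
  · rw [keyp] at hpq hqr ⊢
    exact ⟨ht₁ _ _ _ hpq.1 hqr.1, ht₂ _ _ _ hpq.2 hqr.2⟩
  · rw [keyp] at hpq hqp
    exact Prod.ext (ha₁ _ _ hpq.1 hqp.1) (ha₂ _ _ hpq.2 hqp.2)
  · intro p q
    obtain ⟨m1a, m1b, m1c⟩ := hmeet₁ p.1 q.1
    obtain ⟨m2a, m2b, m2c⟩ := hmeet₂ p.2 q.2
    refine ⟨(keyp _ _).2 ⟨m1a, m2a⟩, (keyp _ _).2 ⟨m1b, m2b⟩, fun z hz1 hz2 => ?_⟩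
    rw [keyp] at hz1 hz2 ⊢
    exact ⟨m1c _ hz1.1 hz2.1, m2c _ hz1.2 hz2.2⟩
  · intro p q
    obtain ⟨j1a, j1b, j1c⟩ := hjoin₁ p.1 q.1
    obtain ⟨j2a, j2b, j2c⟩ := hjoin₂ p.2 q.2
    refine ⟨(keyp _ _).2 ⟨j1a, j2a⟩, (keyp _ _).2 ⟨j1b, j2b⟩, fun w hw1 hw2 => ?_⟩
    rw [keyp] at hw1 hw2 ⊢
    exact ⟨j1c _ hw1.1 hw2.1, j2c _ hw1.2 hw2.2⟩
  · intro p q r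
    exact Prod.ext (hd₁ p.1 q.1 r.1) (hd₂ p.2 q.2 r.2)
end

section
/- Let τ be a triangular norm without zero divisors, and let (X₁, μ₁) and (X₂, μ₂) be fuzzy lattices with chosen operations ⊙₁, ⊕₁ and ⊙₂, ⊕₂ giving fuzzy meets and joins, each modular (i.e., (x ⊙ᵢ y) ⊕ᵢ (z ⊙ᵢ y) = ((x ⊙ᵢ y) ⊕ᵢ z) ⊙ᵢ y for all x, y, z in Xᵢ). Define μ_p on X₁ × X₂ by μ_p((x₁,x₂),(y₁,y₂)) = τ(μ₁(x₁,y₁), μ₂(x₂,y₂)), and define ⊙ and ⊕ coordinatewise on X₁ × X₂. Then μ_p is a fuzzy partial order, the coordinatewise operations give fuzzy meets and fuzzy joins with respect to μ_p, and the modular law (x ⊙ y) ⊕ (z ⊙ y) = ((x ⊙ y) ⊕ z) ⊙ y holds on X₁ × X₂; i.e., the direct product is a modular fuzzy lattice. -/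
theorem tnorm_product_modular {X₁ X₂ : Type*} (τ : ℝ → ℝ → ℝ)
    (hτ : IsTNorm τ) (hzd : ¬ HasZeroDivisorTNorm τ)
    (μ₁ : X₁ → X₁ → ℝ) (μ₂ : X₂ → X₂ → ℝ)
    (h₁ : IsFuzzyOrder μ₁) (h₂ : IsFuzzyOrder μ₂)
    (meet₁ join₁ : X₁ → X₁ → X₁) (meet₂ join₂ : X₂ → X₂ → X₂)
    (hmeet₁ : ∀ x y, IsFuzzyMeet μ₁ x y (meet₁ x y))
    (hjoin₁ : ∀ x y, IsFuzzyJoin μ₁ x y (join₁ x y))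
    (hmeet₂ : ∀ x y, IsFuzzyMeet μ₂ x y (meet₂ x y))
    (hjoin₂ : ∀ x y, IsFuzzyJoin μ₂ x y (join₂ x y))
    (hd₁ : ∀ x y z : X₁, join₁ (meet₁ x y) (meet₁ z y) = meet₁ (join₁ (meet₁ x y) z) y)
    (hd₂ : ∀ x y z : X₂, join₂ (meet₂ x y) (meet₂ z y) = meet₂ (join₂ (meet₂ x y) z) y) :
    IsFuzzyOrder (fun p q : X₁ × X₂ => τ (μ₁ p.1 q.1) (μ₂ p.2 q.2)) ∧
    (∀ p q : X₁ × X₂, IsFuzzyMeet (fun p q : X₁ × X₂ => τ (μ₁ p.1 q.1) (μ₂ p.2 q.2))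
      p q (meet₁ p.1 q.1, meet₂ p.2 q.2)) ∧
    (∀ p q : X₁ × X₂, IsFuzzyJoin (fun p q : X₁ × X₂ => τ (μ₁ p.1 q.1) (μ₂ p.2 q.2))
      p q (join₁ p.1 q.1, join₂ p.2 q.2)) ∧
    (∀ p q r : X₁ × X₂, (join₁ (meet₁ p.1 q.1) (meet₁ r.1 q.1), join₂ (meet₂ p.2 q.2) (meet₂ r.2 q.2)) = (meet₁ (join₁ (meet₁ p.1 q.1) r.1) q.1, meet₂ (join₂ (meet₂ p.2 q.2) r.2) q.2)) := by
  
  obtain ⟨h1m, h1r, h1t, h1a⟩ := h₁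
  obtain ⟨h2m, h2r, h2t, h2a⟩ := h₂
  have key : ∀ (p q : X₁ × X₂), 0 < τ (μ₁ p.1 q.1) (μ₂ p.2 q.2) ↔
      0 < μ₁ p.1 q.1 ∧ 0 < μ₂ p.2 q.2 := fun p q =>
    tnorm_pos_iff hτ hzd (h1m p.1 q.1) (h2m p.2 q.2)
  refine ⟨⟨fun p q => hτ.mem _ (h1m p.1 q.1) _ (h2m p.2 q.2), fun p => ?_, ?_, ?_⟩, ?_, ?_, ?_⟩
  · simp only [h1r, h2r]; exact hτ.unit 1 ⟨zero_le_one, le_refl 1⟩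
  · intro p q r hpq hqr
    rw [key] at hpq hqr ⊢
    exact ⟨h1t _ _ _ hpq.1 hqr.1, h2t _ _ _ hpq.2 hqr.2⟩
  · intro p q hpq hqp
    rw [key] at hpq hqp
    exact Prod.ext (h1a _ _ hpq.1 hqp.1) (h2a _ _ hpq.2 hqp.2)
  · intro p q
    refine ⟨?_, ?_, ?_⟩
    · exact (key _ _).2 ⟨(hmeet₁ p.1 q.1).1, (hmeet₂ p.2 q.2).1⟩
    · exact (key _ _).2 ⟨(hmeet₁ p.1 q.1).2.1, (hmeet₂ p.2 q.2).2.1⟩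
    · intro z hz1 hz2
      rw [key] at hz1 hz2 ⊢
      exact ⟨(hmeet₁ p.1 q.1).2.2 _ hz1.1 hz2.1, (hmeet₂ p.2 q.2).2.2 _ hz1.2 hz2.2⟩
  · intro p q
    refine ⟨?_, ?_, ?_⟩
    · exact (key _ _).2 ⟨(hjoin₁ p.1 q.1).1, (hjoin₂ p.2 q.2).1⟩
    · exact (key _ _).2 ⟨(hjoin₁ p.1 q.1).2.1, (hjoin₂ p.2 q.2).2.1⟩
    · intro w hw1 hw2
      rw [key] at hw1 hw2 ⊢
      exact ⟨(hjoin₁ p.1 q.1).2.2 _ hw1.1 hw2.1, (hjoin₂ p.2 q.2).2.2 _ hw1.2 hw2.2⟩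
  · intro p q r
    rw [hd₁, hd₂]
end

section
/- Let τ be a triangular norm without zero divisors, and let (X₁, μ₁) and (X₂, μ₂) be fuzzy lattices with chosen operations ⊙₁, ⊕₁ and ⊙₂, ⊕₂ giving fuzzy meets and joins, each distributive (i.e., x ⊙ᵢ (y ⊕ᵢ z) = (x ⊙ᵢ y) ⊕ᵢ (x ⊙ᵢ z) for all x, y, z in Xᵢ). Define μ_p on X₁ × X₂ by μ_p((x₁,x₂),(y₁,y₂)) = τ(μ₁(x₁,y₁), μ₂(x₂,y₂)), and define ⊙ and ⊕ coordinatewise on X₁ × X₂. Then μ_p is a fuzzy partial order, the coordinatewise operations give fuzzy meets and fuzzy joins with respect to μ_p, and the modular law (x ⊙ y) ⊕ (z ⊙ y) = ((x ⊙ y) ⊕ z) ⊙ y holds on X₁ × X₂; i.e., the direct product of distributive fuzzy lattices realized by a triangular norm without zero divisors is a modular fuzzy lattice. -/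
section FuzzyAux
variable {X : Type*} {μ : X → X → ℝ}

lemma fm_unique (h : IsFuzzyOrder μ) {x y m m' : X}
    (hm : IsFuzzyMeet μ x y m) (hm' : IsFuzzyMeet μ x y m') : m = m' :=
  h.2.2.2 m m' (hm'.2.2 m hm.1 hm.2.1) (hm.2.2 m' hm'.1 hm'.2.1)

lemma fm_comm (h : IsFuzzyOrder μ) (meet : X → X → X)
    (hmeet : ∀ x y, IsFuzzyMeet μ x y (meet x y)) (x y : X) :
    meet x y = meet y x :=
  fm_unique h (hmeet x y) ⟨(hmeet y x).2.1, (hmeet y x).1, fun z hx hy => (hmeet y x).2.2 z hy hx⟩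

lemma fm_absorb (h : IsFuzzyOrder μ) (meet : X → X → X)
    (hmeet : ∀ x y, IsFuzzyMeet μ x y (meet x y)) {q m : X} (hmq : 0 < μ m q) :
    meet q m = m := by
  refine fm_unique h (hmeet q m) ⟨hmq, ?_, fun z _ hz => hz⟩
  rw [h.2.1]; norm_num

lemma modular_of_distrib (h : IsFuzzyOrder μ) (meet join : X → X → X)
    (hmeet : ∀ x y, IsFuzzyMeet μ x y (meet x y))
    (hd : ∀ x y z, meet x (join y z) = join (meet x y) (meet x z))
    (p q r : X) :
    join (meet p q) (meet r q) = meet (join (meet p q) r) q := by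
  rw [fm_comm h meet hmeet (join (meet p q) r) q, hd,
    fm_absorb h meet hmeet (hmeet p q).2.1, fm_comm h meet hmeet q r]

end FuzzyAux

theorem tnorm_product_distributive_modular {X₁ X₂ : Type*} (τ : ℝ → ℝ → ℝ)
    (hτ : IsTNorm τ) (hzd : ¬ HasZeroDivisorTNorm τ)
    (μ₁ : X₁ → X₁ → ℝ) (μ₂ : X₂ → X₂ → ℝ)
    (h₁ : IsFuzzyOrder μ₁) (h₂ : IsFuzzyOrder μ₂)
    (meet₁ join₁ : X₁ → X₁ → X₁) (meet₂ join₂ : X₂ → X₂ → X₂)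
    (hmeet₁ : ∀ x y, IsFuzzyMeet μ₁ x y (meet₁ x y))
    (hjoin₁ : ∀ x y, IsFuzzyJoin μ₁ x y (join₁ x y))
    (hmeet₂ : ∀ x y, IsFuzzyMeet μ₂ x y (meet₂ x y))
    (hjoin₂ : ∀ x y, IsFuzzyJoin μ₂ x y (join₂ x y))
    (hd₁ : ∀ x y z : X₁, meet₁ x (join₁ y z) = join₁ (meet₁ x y) (meet₁ x z))
    (hd₂ : ∀ x y z : X₂, meet₂ x (join₂ y z) = join₂ (meet₂ x y) (meet₂ x z)) :
    IsFuzzyOrder (fun p q : X₁ × X₂ => τ (μ₁ p.1 q.1) (μ₂ p.2 q.2)) ∧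
    (∀ p q : X₁ × X₂, IsFuzzyMeet (fun p q : X₁ × X₂ => τ (μ₁ p.1 q.1) (μ₂ p.2 q.2))
      p q (meet₁ p.1 q.1, meet₂ p.2 q.2)) ∧
    (∀ p q : X₁ × X₂, IsFuzzyJoin (fun p q : X₁ × X₂ => τ (μ₁ p.1 q.1) (μ₂ p.2 q.2))
      p q (join₁ p.1 q.1, join₂ p.2 q.2)) ∧
    (∀ p q r : X₁ × X₂, (join₁ (meet₁ p.1 q.1) (meet₁ r.1 q.1), join₂ (meet₂ p.2 q.2) (meet₂ r.2 q.2)) = (meet₁ (join₁ (meet₁ p.1 q.1) r.1) q.1, meet₂ (join₂ (meet₂ p.2 q.2) r.2) q.2))  := by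
  have h01 : (0:ℝ) ∈ Set.Icc (0:ℝ) 1 := by constructor <;> norm_num
  have h11 : (1:ℝ) ∈ Set.Icc (0:ℝ) 1 := by constructor <;> norm_num
  have hzero : ∀ a ∈ Set.Icc (0:ℝ) 1, τ a 0 = 0 := by
    intro a ha
    have e1 : τ a 0 = τ 0 a := hτ.comm a ha 0 h01
    have e2 : τ 0 a ≤ τ 0 1 := hτ.mono 0 h01 a ha 1 h11 ha.2
    have e3 : τ 0 1 = 0 := hτ.unit 0 h01
    have e4 : 0 ≤ τ a 0 := (hτ.mem a ha 0 h01).1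
    linarith
  have tpos : ∀ a ∈ Set.Icc (0:ℝ) 1, ∀ b ∈ Set.Icc (0:ℝ) 1, 0 < a → 0 < b → 0 < τ a b := by
    intro a ha b hb ha0 hb0
    rcases eq_or_lt_of_le ha.2 with h1 | h1
    · rw [h1, hτ.comm 1 h11 b hb, hτ.unit b hb]; exact hb0
    rcases eq_or_lt_of_le hb.2 with h2 | h2
    · rw [h2, hτ.unit a ha]; exact ha0
    have e4 : 0 ≤ τ a b := (hτ.mem a ha b hb).1
    rcases e4.lt_or_eq with h | h
    · exact h
    · exact absurd ⟨a, ⟨ha0, h1⟩, b, ⟨hb0, h2⟩, h.symm⟩ hzd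
  have textr : ∀ a ∈ Set.Icc (0:ℝ) 1, ∀ b ∈ Set.Icc (0:ℝ) 1, 0 < τ a b → 0 < a ∧ 0 < b := by
    intro a ha b hb hab
    constructor
    · rcases ha.1.lt_or_eq with h | h
      · exact h
      · exfalso; rw [hτ.comm a ha b hb, ← h, hzero b hb] at hab
        exact lt_irrefl 0 hab
    · rcases hb.1.lt_or_eq with h | h
      · exact h
      · exfalso; rw [← h, hzero a ha] at hab; exact lt_irrefl 0 hab
  have hord : IsFuzzyOrder (fun p q : X₁ × X₂ => τ (μ₁ p.1 q.1) (μ₂ p.2 q.2)) := by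
    refine ⟨fun p q => hτ.mem _ (h₁.1 _ _) _ (h₂.1 _ _), fun p => ?_, ?_, ?_⟩
    · simp only [h₁.2.1, h₂.2.1]; exact hτ.unit 1 h11
    · intro p q r hpq hqr
      obtain ⟨a1, a2⟩ := textr _ (h₁.1 _ _) _ (h₂.1 _ _) hpq
      obtain ⟨b1, b2⟩ := textr _ (h₁.1 _ _) _ (h₂.1 _ _) hqr
      exact tpos _ (h₁.1 _ _) _ (h₂.1 _ _) (h₁.2.2.1 _ _ _ a1 b1) (h₂.2.2.1 _ _ _ a2 b2)
    · intro p q hpq hqp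
      obtain ⟨a1, a2⟩ := textr _ (h₁.1 _ _) _ (h₂.1 _ _) hpq
      obtain ⟨b1, b2⟩ := textr _ (h₁.1 _ _) _ (h₂.1 _ _) hqp
      exact Prod.ext (h₁.2.2.2 _ _ a1 b1) (h₂.2.2.2 _ _ a2 b2)
  have ppos : ∀ (a c : X₁) (b d : X₂), 0 < μ₁ a c → 0 < μ₂ b d →
      0 < τ (μ₁ a c) (μ₂ b d) := fun a c b d h1 h2 => tpos _ (h₁.1 _ _) _ (h₂.1 _ _) h1 h2
  have pext : ∀ (a c : X₁) (b d : X₂), 0 < τ (μ₁ a c) (μ₂ b d) →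
      0 < μ₁ a c ∧ 0 < μ₂ b d := fun a c b d h => textr _ (h₁.1 _ _) _ (h₂.1 _ _) h
  refine ⟨hord, ?_, ?_, ?_⟩
  · intro p q
    refine ⟨ppos _ _ _ _ (hmeet₁ _ _).1 (hmeet₂ _ _).1,
      ppos _ _ _ _ (hmeet₁ _ _).2.1 (hmeet₂ _ _).2.1, fun z hz1 hz2 => ?_⟩
    obtain ⟨a1, a2⟩ := pext _ _ _ _ hz1
    obtain ⟨b1, b2⟩ := pext _ _ _ _ hz2
    exact ppos _ _ _ _ ((hmeet₁ _ _).2.2 _ a1 b1) ((hmeet₂ _ _).2.2 _ a2 b2)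
  · intro p q
    refine ⟨ppos _ _ _ _ (hjoin₁ _ _).1 (hjoin₂ _ _).1,
      ppos _ _ _ _ (hjoin₁ _ _).2.1 (hjoin₂ _ _).2.1, fun w hw1 hw2 => ?_⟩
    obtain ⟨a1, a2⟩ := pext _ _ _ _ hw1
    obtain ⟨b1, b2⟩ := pext _ _ _ _ hw2
    exact ppos _ _ _ _ ((hjoin₁ _ _).2.2 _ a1 b1) ((hjoin₂ _ _).2.2 _ a2 b2)
  · intro p q r
    exact Prod.ext (modular_of_distrib h₁ meet₁ join₁ hmeet₁ hd₁ p.1 q.1 r.1)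
      (modular_of_distrib h₂ meet₂ join₂ hmeet₂ hd₂ p.2 q.2 r.2)
end
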